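/- arXiv:2403.18727 — 2 statements merged into one kernel-verified Lean document; each statement's English description precedes it below -/
import Mathlib

section
/- Let $p$ be a prime and $\mathbbm{k}$ an algebraically closed field of characteristic $p$. Let $\lambda(u) = (1+\alpha_1 u^{-1})\cdots(1+\alpha_k u^{-1}) \in 1 + u^{-1}\mathbbm{k}[u^{-1}]$ be a polynomial in $u^{-1}$ with constant term $1$. If $\lambda(u)\lambda(u-1)\cdots\lambda(u-p+1) = 1$, then every root parameter $\alpha_i$ lies in the prime field $\mathbb{F}_p$. -/
/-! Evaluating the identity at `-αⱼ` kills the factor `u + αⱼ - 0` on the left, so `-αⱼ` is a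
root of `∏ᵢ (u - i)^k`, i.e. `αⱼ = -i` for an integer `i`, and integers are fixed by Frobenius. -/

open Polynomial

theorem intCast_pow_char (R : Type*) [CommRing R] (p : ℕ) [ExpChar R p] (n : ℤ) :
    (n : R) ^ p = n :=
  map_intCast (frobenius R p) n

theorem exists_eq_of_isRoot_prod_X_sub_C_pow {R ι : Type*} [CommRing R] [IsDomain R]
    {s : Finset ι} {f : ι → R} {k : ℕ} {a : R}
    (ha : IsRoot (∏ i ∈ s, (X - C (f i)) ^ k) a) : ∃ i ∈ s, a = f i := by
  obtain ⟨i, hi, ha_i⟩ := (isRoot_prod _ _ _).1 ha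
  refine ⟨i, hi, sub_eq_zero.1 (eq_zero_of_pow_eq_zero (?_ : (a - f i) ^ k = 0))⟩
  simpa using ha_i

theorem restricted_polynomial_roots_in_Fp_general
    (p : ℕ) [Fact p.Prime] (𝕜 : Type*) [Field 𝕜] [CharP 𝕜 p]
    (k : ℕ) (α : Fin k → 𝕜)
    (h : ∏ j : Fin k, ∏ i ∈ Finset.range p, (X + C (α j) - C (i : 𝕜)) =
        ∏ i ∈ Finset.range p, (X - C (i : 𝕜)) ^ k) :
    ∀ j : Fin k, (α j) ^ p = α j := by
  intro j
  have hroot : IsRoot (∏ i ∈ Finset.range p, (X - C (i : 𝕜)) ^ k) (-α j) := by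
    rw [← h, isRoot_prod]
    refine ⟨j, Finset.mem_univ j, (isRoot_prod _ _ _).2 ⟨0, ?_, by simp⟩⟩
    exact Finset.mem_range.2 (Fact.out : p.Prime).pos
  obtain ⟨i, -, hi⟩ := exists_eq_of_isRoot_prod_X_sub_C_pow hroot
  have hα : α j = ((-i : ℤ) : 𝕜) := by
    push_cast
    linear_combination -hi
  rw [hα, intCast_pow_char]

/-- If `λ(u) = ∏ (1 + αⱼ u⁻¹)` is restricted, i.e.
`∏_{j} ∏_{i=0}^{p-1} (u + αⱼ - i) = ∏_{i=0}^{p-1} (u - i)^k` as polynomials in `u`,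
then every `αⱼ` lies in `𝔽_p` (equivalently `αⱼ^p = αⱼ`). -/
theorem restricted_polynomial_roots_in_Fp
    (p : ℕ) [Fact p.Prime] (𝕜 : Type*) [Field 𝕜] [IsAlgClosed 𝕜] [CharP 𝕜 p]
    (k : ℕ) (α : Fin k → 𝕜)
    (h : ∏ j : Fin k, ∏ i ∈ Finset.range p, (X + C (α j) - C (i : 𝕜)) =
        ∏ i ∈ Finset.range p, (X - C (i : 𝕜)) ^ k) :
    ∀ j : Fin k, (α j) ^ p = α j :=
  restricted_polynomial_roots_in_Fp_general p 𝕜 k α h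
end

section
/- Let $\mathbbm{k}$ be an algebraically closed field of characteristic $p$, let $\alpha_1, \beta_1, \ldots, \alpha_k, \beta_k \in \mathbb{F}_p$, and suppose $0 \le s \le [\alpha_1 - \beta_1]$ and $[\alpha_1 - \beta_j] \ge [\alpha_1 - \beta_1]$ for all $j = 1, \ldots, k$. If $s(\alpha_1 - \beta_1 - s + 1)(\alpha_1 - \beta_2 - s + 1)\cdots(\alpha_1 - \beta_k - s + 1) = 0$ in $\mathbbm{k}$, then $s = 0$. -/
/-! A vanishing factor of the product gives `s ≡ (α - βⱼ) + 1 (mod p)`. Since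
`s ≤ [α - β₁] ≤ [α - βⱼ] < p`, the residue `[α - βⱼ] + 1` cannot be `s` unless it wraps
around to `p`, and then `s ≡ 0`, so `s = 0`. -/

theorem ZMod.eq_zero_of_natCast_eq_add_one {n : ℕ} [NeZero n] {a : ZMod n} {s : ℕ}
    (hs : s ≤ a.val) (h : (s : ZMod n) = a + 1) : s = 0 := by
  have ha : a.val < n := a.val_lt
  have hmod : s = (a.val + 1) % n := by
    rw [← Nat.mod_eq_of_lt (hs.trans_lt ha), ← ZMod.natCast_eq_natCast_iff', h]
    push_cast [ZMod.natCast_zmod_val]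
    rfl
  rcases (show a.val + 1 ≤ n from ha).eq_or_lt with hn | hn
  · rwa [hn, Nat.mod_self] at hmod
  · rw [Nat.mod_eq_of_lt hn] at hmod
    omega

theorem tensor_irreducibility_arithmetic_lemma_general
    (p : ℕ) [Fact p.Prime] (𝕜 : Type*) [Field 𝕜] [CharP 𝕜 p]
    (k : ℕ) (hk : 0 < k) (α : ZMod p) (β : Fin k → ZMod p) (s : ℕ)
    (hs : s ≤ (α - β ⟨0, hk⟩).val)
    (hmin : ∀ j : Fin k, (α - β ⟨0, hk⟩).val ≤ (α - β j).val)
    (h : (s : 𝕜) * ∏ j : Fin k,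
        (ZMod.castHom (dvd_refl p) 𝕜 α - ZMod.castHom (dvd_refl p) 𝕜 (β j)
          - (s : 𝕜) + 1) = 0) :
    s = 0 := by
  by_contra hs0
  have hsp : s < p := hs.trans_lt (ZMod.val_lt _)
  have hs𝕜 : (s : 𝕜) ≠ 0 := fun h0 =>
    hs0 (Nat.eq_zero_of_dvd_of_lt ((CharP.cast_eq_zero_iff 𝕜 p s).mp h0) hsp)
  obtain ⟨j, -, hj⟩ := Finset.prod_eq_zero_iff.mp ((mul_eq_zero.mp h).resolve_left hs𝕜)
  have hfactor : α - β j - s + 1 = 0 := by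
    apply ZMod.castHom_injective 𝕜
    simpa using hj
  exact hs0 (ZMod.eq_zero_of_natCast_eq_add_one (hs.trans (hmin j))
    (by linear_combination -hfactor))

/-- the arithmetic crux of irreducibility of tensor products of
evaluation modules: for `α₁, βⱼ ∈ 𝔽_p`, if `0 ≤ s ≤ [α₁ - β₁]`,
`[α₁ - βⱼ] ≥ [α₁ - β₁]` for all `j`, and
`s · ∏ⱼ (α₁ - βⱼ - s + 1) = 0` in `𝕜`, then `s = 0`. -/
theorem tensor_irreducibility_arithmetic_lemma
    (p : ℕ) [Fact p.Prime] (𝕜 : Type*) [Field 𝕜] [IsAlgClosed 𝕜] [CharP 𝕜 p]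
    (k : ℕ) (hk : 0 < k) (α : ZMod p) (β : Fin k → ZMod p) (s : ℕ)
    (hs : s ≤ (α - β ⟨0, hk⟩).val)
    (hmin : ∀ j : Fin k, (α - β ⟨0, hk⟩).val ≤ (α - β j).val)
    (h : (s : 𝕜) * ∏ j : Fin k,
        (ZMod.castHom (dvd_refl p) 𝕜 α - ZMod.castHom (dvd_refl p) 𝕜 (β j)
          - (s : 𝕜) + 1) = 0) :
    s = 0 :=
  tensor_irreducibility_arithmetic_lemma_general p 𝕜 k hk α β s hs hmin h
end
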